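/- For j = 1, …, m, let α_j > 0, let L_j be slowly varying at infinity, and let B_j : [0,∞) → (0,1] be continuous with B_j(0) = 1 and B_j(z) = z^{−α_j} L_j(z) for z > 0. Let l_0 ≥ 1 be an integer and let (k_{1,l_0}, …, k_{m,l_0}) be nonnegative integers with ∑_{j=1}^m k_{j,l_0} = l_0 and ∑_{j=1}^m α_j k_{j,l_0} < (l_0 + 1) · min_{1≤j≤m} α_j. Then there exists a constant C > 0 such that for every integer l > l_0, every tuple (k_{1,l}, …, k_{m,l}) of nonnegative integers with ∑_{j=1}^m k_{j,l} = l, and every z ≥ 0, one has ∏_{j=1}^m B_j(z)^{k_{j,l}} ≤ C · ∏_{j=1}^m B_j(z)^{k_{j,l_0}}. -/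

import Mathlib

open Finset Filter

/-- A measurable function `L : (0,∞) → (0,∞)` is slowly varying at infinity if
`L(λz)/L(z) → 1` as `z → ∞` for every `λ > 0`. -/
def SlowlyVarying (L : ℝ → ℝ) : Prop :=
  Measurable L ∧ (∀ z : ℝ, 0 < z → 0 < L z) ∧
    ∀ lam : ℝ, 0 < lam → Tendsto (fun z => L (lam * z) / L z) atTop (nhds 1)

/-!
Fix a tuple `k` with `∑ kⱼ = l₀ + 1`. The ratio `R(z) = ∏ Bⱼ(z)^{kⱼ} / ∏ Bⱼ(z)^{k₀ⱼ}` is regularly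
varying with index `∑ αⱼ k₀ⱼ - ∑ αⱼ kⱼ`, which is negative because `∑ αⱼ kⱼ ≥ (l₀ + 1) minⱼ αⱼ`.
Hence `R(2z)/R(z) → 2^index < 1`, so `R(2z) ≤ R(z)` beyond some `Z`, and the continuous `R` is
bounded on `[0, ∞)` by its maximum on `[0, 2Z]`. There are finitely many such `k`, and since
`Bⱼ ≤ 1`, a tuple at any level `l > l₀` gives a smaller product than some such `k` below it.
-/

open Topology

theorem bddAbove_image_Ici_of_eventually_le_comp_mul {f : ℝ → ℝ} {c : ℝ} (hc : 1 < c)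
    (hf : ContinuousOn f (Set.Ici 0)) (hdec : ∀ᶠ z in atTop, f (c * z) ≤ f z) :
    BddAbove (f '' Set.Ici 0) := by
  obtain ⟨Z, hZ⟩ := eventually_atTop.1 (hdec.and (eventually_ge_atTop 1))
  obtain ⟨M, hM⟩ := (isCompact_Icc (a := 0) (b := c * Z)).bddAbove_image
    (hf.mono Set.Icc_subset_Ici_self)
  have hcZ : 1 ≤ c * Z := by nlinarith [(hZ Z le_rfl).2]
  have hbound : ∀ n : ℕ, ∀ z, 0 ≤ z → z ≤ c ^ n * (c * Z) → f z ≤ M := by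
    intro n
    induction n with
    | zero => exact fun z hz hzn => hM ⟨z, ⟨hz, by simpa using hzn⟩, rfl⟩
    | succ n ih =>
      intro z hz hzn
      by_cases hsmall : z ≤ c * Z
      · exact hM ⟨z, ⟨hz, hsmall⟩, rfl⟩
      have hc0 : 0 < c := zero_lt_one.trans hc
      have hzc : Z ≤ z / c := by rw [le_div_iff₀ hc0]; linarith
      calc f z = f (c * (z / c)) := by rw [mul_div_cancel₀ _ hc0.ne']
        _ ≤ f (z / c) := (hZ _ hzc).1
        _ ≤ M := ih _ (by positivity) (by rw [div_le_iff₀ hc0]; rw [pow_succ] at hzn; linarith)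
  refine ⟨M, ?_⟩
  rintro _ ⟨z, hz, rfl⟩
  obtain ⟨n, hn⟩ := pow_unbounded_of_one_lt z hc
  exact hbound n z hz (by nlinarith [pow_pos (zero_lt_one.trans hc) n])

/-- Regular variation of index `ρ`, i.e. `f z = z ^ ρ * ℓ z` with `ℓ` slowly varying. Positivity of
`f` (without which the quotient is junk) is assumed separately where it is needed. -/
def RegularlyVarying (f : ℝ → ℝ) (ρ : ℝ) : Prop :=
  ∀ c : ℝ, 0 < c → Tendsto (fun z => f (c * z) / f z) atTop (𝓝 (c ^ ρ))

namespace RegularlyVarying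

theorem of_eq_rpow_mul {L B : ℝ → ℝ} {ρ : ℝ} (hL : SlowlyVarying L)
    (hB : ∀ z, 0 < z → B z = z ^ ρ * L z) : RegularlyVarying B ρ := by
  intro c hc
  have hlim := (tendsto_const_nhds (x := c ^ ρ)).mul (hL.2.2 c hc)
  rw [mul_one] at hlim
  refine hlim.congr' ?_
  filter_upwards [eventually_gt_atTop 0] with z hz
  rw [hB z hz, hB (c * z) (mul_pos hc hz), Real.mul_rpow hc.le hz.le, mul_assoc, mul_div_assoc,
    mul_div_mul_left _ _ (Real.rpow_pos_of_pos hz ρ).ne']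

variable {f g : ℝ → ℝ} {ρ σ : ℝ}

theorem pow (hf : RegularlyVarying f ρ) (n : ℕ) :
    RegularlyVarying (fun z => f z ^ n) (n * ρ) := by
  intro c hc
  simp only [← div_pow, mul_comm (n : ℝ), Real.rpow_mul_natCast hc.le]
  exact (hf c hc).pow n

theorem div (hf : RegularlyVarying f ρ) (hg : RegularlyVarying g σ) :
    RegularlyVarying (fun z => f z / g z) (ρ - σ) := by
  intro c hc
  simp only [div_div_div_comm _ (g _), Real.rpow_sub hc]
  exact (hf c hc).div (hg c hc) (Real.rpow_pos_of_pos hc σ).ne'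

theorem prod {ι : Type*} (s : Finset ι) {f : ι → ℝ → ℝ} {ρ : ι → ℝ}
    (h : ∀ i ∈ s, RegularlyVarying (f i) (ρ i)) :
    RegularlyVarying (fun z => ∏ i ∈ s, f i z) (∑ i ∈ s, ρ i) := by
  intro c hc
  simp only [← prod_div_distrib, Real.rpow_sum_of_pos hc]
  exact tendsto_finsetProd s fun i hi => h i hi c hc

theorem bddAbove_image_Ici (hf : RegularlyVarying f ρ)
    (hρ : ρ < 0) (hcont : ContinuousOn f (Set.Ici 0)) (hpos : ∀ᶠ z in atTop, 0 < f z) :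
    BddAbove (f '' Set.Ici 0) := by
  refine bddAbove_image_Ici_of_eventually_le_comp_mul one_lt_two hcont ?_
  have hratio : ∀ᶠ z in atTop, f (2 * z) / f z < 1 :=
    (hf 2 two_pos).eventually_lt_const (Real.rpow_lt_one_of_one_lt_of_neg one_lt_two hρ)
  filter_upwards [hratio, hpos] with z hz hfz
  exact ((div_lt_one hfz).1 hz).le

end RegularlyVarying

theorem sum_mul_ciInf_le {ι : Type*} [Fintype ι] (α w : ι → ℝ) (hw : ∀ i, 0 ≤ w i) :
    (∑ i, w i) * ⨅ i, α i ≤ ∑ i, α i * w i := by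
  rw [sum_mul]
  exact sum_le_sum fun i _ => by
    rw [mul_comm]; exact mul_le_mul_of_nonneg_right (ciInf_le (Finite.bddBelow_range α) i) (hw i)

theorem exists_le_sum_eq {ι : Type*} [Fintype ι] [DecidableEq ι] (k : ι → ℕ) {n : ℕ}
    (hn : n ≤ ∑ i, k i) : ∃ k' : ι → ℕ, k' ≤ k ∧ ∑ i, k' i = n := by
  induction n with
  | zero => exact ⟨0, fun i => Nat.zero_le _, by simp⟩
  | succ n ih =>
    obtain ⟨k', hk'k, hk'n⟩ := ih (by omega)
    obtain ⟨j, -, hj⟩ := exists_lt_of_sum_lt (s := univ) (f := k') (g := k) (by omega)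
    refine ⟨k' + Pi.single j 1, fun i => ?_, ?_⟩
    · rcases eq_or_ne i j with rfl | hij
      · simpa using hj
      · simpa [hij] using hk'k i
    · simp [sum_add_distrib, hk'n]

theorem bddAbove_image_Ici_prod_pow_div_prod_pow {ι : Type*} [Fintype ι] (α : ι → ℝ)
    (L B : ι → ℝ → ℝ) (hL : ∀ j, SlowlyVarying (L j))
    (hBcont : ∀ j, ContinuousOn (B j) (Set.Ici 0)) (hBpos : ∀ j z, 0 ≤ z → 0 < B j z)
    (hBeq : ∀ j z, 0 < z → B j z = z ^ (-(α j)) * L j z)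
    {k₀ k : ι → ℕ} (hk : ∑ j, α j * k₀ j < ∑ j, α j * k j) :
    BddAbove ((fun z => (∏ j, B j z ^ k j) / ∏ j, B j z ^ k₀ j) '' Set.Ici 0) := by
  have hRV (k : ι → ℕ) :
      RegularlyVarying (fun z => ∏ j, B j z ^ k j) (∑ j, k j * -α j) :=
    RegularlyVarying.prod _ fun j _ => (RegularlyVarying.of_eq_rpow_mul (hL j) (hBeq j)).pow _
  have hcont (k : ι → ℕ) : ContinuousOn (fun z => ∏ j, B j z ^ k j) (Set.Ici 0) :=
    continuousOn_finsetProd _ fun j _ => (hBcont j).pow _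
  have hpos (k : ι → ℕ) (z : ℝ) (hz : 0 ≤ z) : 0 < ∏ j, B j z ^ k j :=
    prod_pos fun j _ => pow_pos (hBpos j z hz) _
  refine ((hRV k).div (hRV k₀)).bddAbove_image_Ici ?_
    ((hcont k).div (hcont k₀) fun z hz => (hpos k₀ z hz).ne') ?_
  · simp only [mul_comm (Nat.cast _ : ℝ), neg_mul, sum_neg_distrib]
    linarith
  · filter_upwards [eventually_ge_atTop 0] with z hz using div_pos (hpos k z hz) (hpos k₀ z hz)

theorem stmt3_general (m : ℕ) (α : Fin m → ℝ)
    (L : Fin m → ℝ → ℝ) (hL : ∀ j, SlowlyVarying (L j))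
    (B : Fin m → ℝ → ℝ)
    (hBcont : ∀ j, ContinuousOn (B j) (Set.Ici 0))
    (hBmem : ∀ j, ∀ z : ℝ, 0 ≤ z → B j z ∈ Set.Ioc (0 : ℝ) 1)
    (hBeq : ∀ j, ∀ z : ℝ, 0 < z → B j z = z ^ (-(α j)) * L j z)
    (l₀ : ℕ) (k₀ : Fin m → ℕ)
    (hlt : ∑ j, α j * (k₀ j : ℝ) < ((l₀ : ℝ) + 1) * ⨅ j, α j) :
    ∃ C : ℝ, 0 < C ∧
      ∀ l : ℕ, l₀ < l → ∀ k : Fin m → ℕ, ∑ j, k j = l →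
        ∀ z : ℝ, 0 ≤ z → ∏ j, B j z ^ k j ≤ C * ∏ j, B j z ^ k₀ j := by
  set R : (Fin m → ℕ) → ℝ → ℝ := fun k z => (∏ j, B j z ^ k j) / ∏ j, B j z ^ k₀ j
  have hBpos : ∀ j z, 0 ≤ z → 0 < B j z := fun j z hz => (hBmem j z hz).1
  obtain ⟨M, hM⟩ : BddAbove
      (⋃ k ∈ (Nat.antidiagonalTuple m (l₀ + 1) : Set (Fin m → ℕ)), R k '' Set.Ici 0) := by
    refine (finite_toSet _).bddAbove_biUnion.2 fun k hk =>
      bddAbove_image_Ici_prod_pow_div_prod_pow α L B hL hBcont hBpos hBeq (hlt.trans_le ?_)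
    have hk : ∑ j, k j = l₀ + 1 := Nat.mem_antidiagonalTuple.1 hk
    simpa [← Nat.cast_sum, hk] using sum_mul_ciInf_le α (fun j => (k j : ℝ)) fun j => by positivity
  refine ⟨max M 1, by positivity, fun l hl k hk z hz => ?_⟩
  obtain ⟨k', hk'k, hk'sum⟩ := exists_le_sum_eq k (n := l₀ + 1) (by omega)
  have hk₀pos : 0 < ∏ j, B j z ^ k₀ j := prod_pos fun j _ => pow_pos (hBpos j z hz) _
  calc ∏ j, B j z ^ k j ≤ ∏ j, B j z ^ k' j :=
        prod_le_prod (fun j _ => (pow_pos (hBpos j z hz) _).le) fun j _ =>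
          pow_le_pow_of_le_one (hBpos j z hz).le (hBmem j z hz).2 (hk'k j)
    _ = R k' z * ∏ j, B j z ^ k₀ j := (div_mul_cancel₀ _ hk₀pos.ne').symm
    _ ≤ max M 1 * ∏ j, B j z ^ k₀ j := by
      refine mul_le_mul_of_nonneg_right ((hM ?_).trans (le_max_left _ _)) hk₀pos.le
      exact Set.mem_biUnion (Nat.mem_antidiagonalTuple.2 hk'sum) ⟨z, hz, rfl⟩

/-- Under the long-range dependence conditions, there is a constant `C > 0`
such that for every level `l > l₀` and every admissible tuple `k` at level `l`,
`∏ Bⱼ(z)^{kⱼ} ≤ C · ∏ Bⱼ(z)^{k₀ⱼ}` for all `z ≥ 0`. -/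
theorem stmt3 (m : ℕ) (hm : 1 ≤ m) (α : Fin m → ℝ) (hα : ∀ j, 0 < α j)
    (L : Fin m → ℝ → ℝ) (hL : ∀ j, SlowlyVarying (L j))
    (B : Fin m → ℝ → ℝ)
    (hBcont : ∀ j, ContinuousOn (B j) (Set.Ici 0))
    (hBmem : ∀ j, ∀ z : ℝ, 0 ≤ z → B j z ∈ Set.Ioc (0 : ℝ) 1)
    (hB0 : ∀ j, B j 0 = 1)
    (hBeq : ∀ j, ∀ z : ℝ, 0 < z → B j z = z ^ (-(α j)) * L j z)
    (l₀ : ℕ) (hl₀ : 1 ≤ l₀) (k₀ : Fin m → ℕ)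
    (hsum₀ : ∑ j, k₀ j = l₀)
    (hlt : ∑ j, α j * (k₀ j : ℝ) < ((l₀ : ℝ) + 1) * ⨅ j, α j) :
    ∃ C : ℝ, 0 < C ∧
      ∀ l : ℕ, l₀ < l → ∀ k : Fin m → ℕ, ∑ j, k j = l →
        ∀ z : ℝ, 0 ≤ z → ∏ j, B j z ^ k j ≤ C * ∏ j, B j z ^ k₀ j :=
  stmt3_general m α L hL B hBcont hBmem hBeq l₀ k₀ hlt
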